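/- For all real m and v, the discriminant of f(m,u,v) as a quadratic in u factors as (3m² − 7mv − 2v²)² − 4(2m − 2v)(m³ + 3m²v + 2mv²) = 4(v − γ₊m)(v − γ₋m)(v − ϑ₊m)(v − ϑ₋m), where γ± = (1/4)[−11 − 4√3 ± 2√(225/4 + 30√3)] and ϑ± = −11/4 + √3 ± (1/4)√(15(15 − 8√3)). -/

import Mathlib

/-!
The discriminant is a difference of squares in disguise:
`(2v² + 11mv − 7m²)² − 3·(4m(v − m))²`. Hence it is the product of the two conjugate quadratics
`2v² + 11mv − 7m² ± √3·4m(v − m)`, and γ± resp. ϑ± are the roots in `v/m` of these quadratics.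
-/

open Real

theorem discriminant_eq_mul_conj {R : Type*} [CommRing R] {s : R} (hs : s ^ 2 = 3) (m v : R) :
    (3 * m ^ 2 - 7 * m * v - 2 * v ^ 2) ^ 2
      - 4 * (2 * m - 2 * v) * (m ^ 3 + 3 * m ^ 2 * v + 2 * m * v ^ 2)
    = (2 * v ^ 2 + 11 * m * v - 7 * m ^ 2 + s * (4 * m * (v - m)))
        * (2 * v ^ 2 + 11 * m * v - 7 * m ^ 2 - s * (4 * m * (v - m))) := by
  linear_combination (4 * m * (v - m)) ^ 2 * hs

theorem two_mul_gamma_factors (m v : ℝ) :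
    2 * (v - ((1 / 4) * (-11 - 4 * √3 + 2 * √(225 / 4 + 30 * √3))) * m)
      * (v - ((1 / 4) * (-11 - 4 * √3 - 2 * √(225 / 4 + 30 * √3))) * m)
    = 2 * v ^ 2 + 11 * m * v - 7 * m ^ 2 + √3 * (4 * m * (v - m)) := by
  have h3 : √3 ^ 2 = 3 := sq_sqrt (by norm_num)
  have hγ : √(225 / 4 + 30 * √3) ^ 2 = 225 / 4 + 30 * √3 := sq_sqrt (by positivity)
  linear_combination (2 * m ^ 2) * h3 - (m ^ 2 / 2) * hγ

theorem two_mul_theta_factors (m v : ℝ) :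
    2 * (v - (-11 / 4 + √3 + (1 / 4) * √(15 * (15 - 8 * √3))) * m)
      * (v - (-11 / 4 + √3 - (1 / 4) * √(15 * (15 - 8 * √3))) * m)
    = 2 * v ^ 2 + 11 * m * v - 7 * m ^ 2 - √3 * (4 * m * (v - m)) := by
  have h3 : √3 ^ 2 = 3 := sq_sqrt (by norm_num)
  have hle : √3 ≤ 15 / 8 := (sqrt_le_left (by norm_num)).mpr (by norm_num)
  have hϑ : √(15 * (15 - 8 * √3)) ^ 2 = 15 * (15 - 8 * √3) := sq_sqrt (by linarith)
  linear_combination (2 * m ^ 2) * h3 - (m ^ 2 / 8) * hϑ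

theorem discriminant_factorization (m v : ℝ) :
    (3 * m ^ 2 - 7 * m * v - 2 * v ^ 2) ^ 2
      - 4 * (2 * m - 2 * v) * (m ^ 3 + 3 * m ^ 2 * v + 2 * m * v ^ 2)
    = 4 * (v - ((1 / 4) * (-11 - 4 * Real.sqrt 3
            + 2 * Real.sqrt (225 / 4 + 30 * Real.sqrt 3))) * m)
        * (v - ((1 / 4) * (-11 - 4 * Real.sqrt 3
            - 2 * Real.sqrt (225 / 4 + 30 * Real.sqrt 3))) * m)
        * (v - (-11 / 4 + Real.sqrt 3
            + (1 / 4) * Real.sqrt (15 * (15 - 8 * Real.sqrt 3))) * m)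
        * (v - (-11 / 4 + Real.sqrt 3
            - (1 / 4) * Real.sqrt (15 * (15 - 8 * Real.sqrt 3))) * m) := by
  rw [discriminant_eq_mul_conj (sq_sqrt (by norm_num : (0 : ℝ) ≤ 3)),
    ← two_mul_gamma_factors, ← two_mul_theta_factors]
  ring
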